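/- arXiv:1403.1307 — 3 statements merged into one kernel-verified Lean document; each statement's English description precedes it below -/
import Mathlib

section
/- Define f̂(x,y) = −xy·log₂|xy| for xy ≠ 0 and 0 otherwise, and Ψ(w,x,y,z) = f̂(w,x) + f̂(y,z). There is an absolute constant C such that for all reals w,x,y,z and all angles θ, θ' ∈ [0, 2π], |Ψ(w cos θ + y sin θ, x cos θ + z sin θ, −w sin θ + y cos θ, −x sin θ + z cos θ) − Ψ(w cos θ' + y sin θ', x cos θ' + z sin θ', −w sin θ' + y cos θ', −x sin θ' + z cos θ')| ≤ C·√((w² + y²)(x² + z²)). -/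
open Real

noncomputable def fhat (x y : ℝ) : ℝ :=
  if x * y = 0 then 0 else -(x * y) * Real.logb 2 |x * y|

noncomputable def Psi (w x y z : ℝ) : ℝ := fhat w x + fhat y z

lemma neg_mul_log_le_half {u : ℝ} (hu : 0 < u) (hu1 : u ≤ 1) :
    u * (-Real.log u) ≤ 1 / 2 := by
  set s := Real.sqrt u with hs
  have hs0 : 0 < s := Real.sqrt_pos.2 hu
  have hsq : s ^ 2 = u := Real.sq_sqrt hu.le
  have hlog : Real.log u = 2 * Real.log s := by
    rw [← hsq, Real.log_pow]; push_cast; ring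
  have h1 : Real.log (1 / s) ≤ 1 / s - 1 := Real.log_le_sub_one_of_pos (by positivity)
  rw [Real.log_div one_ne_zero hs0.ne', Real.log_one] at h1
  have h2 : 2 * s ^ 2 * (0 - Real.log s) ≤ 2 * s ^ 2 * (1 / s - 1) :=
    mul_le_mul_of_nonneg_left h1 (by positivity)
  have h3 : 2 * s ^ 2 * (1 / s - 1) = 2 * s - 2 * s ^ 2 := by
    field_simp
  rw [hlog, ← hsq]
  nlinarith [sq_nonneg (s - 1 / 2), h2, h3]

lemma fhat_shift_bound {a b r : ℝ} (hr : 0 < r) (hab : |a * b| ≤ r) :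
    |fhat a b + a * b * Real.logb 2 r| ≤ r := by
  unfold fhat
  by_cases h : a * b = 0
  · simp [h, hr.le]
  · rw [if_neg h]
    have habs : 0 < |a * b| := abs_pos.2 h
    have key : -(a * b) * Real.logb 2 |a * b| + a * b * Real.logb 2 r
        = -(a * b) * Real.logb 2 (|a * b| / r) := by
      rw [Real.logb_div (ne_of_gt habs) hr.ne']; ring
    rw [key, abs_mul, abs_neg]
    set u : ℝ := |a * b| / r with hu
    have hu0 : 0 < u := div_pos habs hr
    have hu1 : u ≤ 1 := (div_le_one hr).2 hab
    have hlog2 : (0.6931471803 : ℝ) < Real.log 2 := Real.log_two_gt_d9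
    have hlognp : Real.log u ≤ 0 := Real.log_nonpos hu0.le hu1
    have hbl : |Real.logb 2 u| = -Real.log u / Real.log 2 := by
      rw [Real.logb, abs_div, abs_of_nonpos hlognp,
        abs_of_pos (by linarith : (0:ℝ) < Real.log 2)]
    rw [hbl]
    have hmain := neg_mul_log_le_half hu0 hu1
    have habu : |a * b| = u * r := by rw [hu]; field_simp
    rw [habu]
    have : u * r * (-Real.log u / Real.log 2) = r * (u * (-Real.log u)) / Real.log 2 := by
      ring
    rw [this]
    rw [div_le_iff₀ (by linarith : (0:ℝ) < Real.log 2)]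
    nlinarith [hr.le, mul_le_mul_of_nonneg_left hmain hr.le]

lemma psi_bound (w x y z θ : ℝ)
    (hr : 0 < Real.sqrt ((w ^ 2 + y ^ 2) * (x ^ 2 + z ^ 2))) :
    |Psi (w * cos θ + y * sin θ) (x * cos θ + z * sin θ)
        (-w * sin θ + y * cos θ) (-x * sin θ + z * cos θ)
      + (w * x + y * z) * Real.logb 2 (Real.sqrt ((w ^ 2 + y ^ 2) * (x ^ 2 + z ^ 2)))|
      ≤ 2 * Real.sqrt ((w ^ 2 + y ^ 2) * (x ^ 2 + z ^ 2)) := by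
  set r := Real.sqrt ((w ^ 2 + y ^ 2) * (x ^ 2 + z ^ 2)) with hrdef
  set a := w * cos θ + y * sin θ with ha
  set b := x * cos θ + z * sin θ with hb
  set c := -w * sin θ + y * cos θ with hc
  set d := -x * sin θ + z * cos θ with hd
  have hpyth := sin_sq_add_cos_sq θ
  have hac : a ^ 2 + c ^ 2 = w ^ 2 + y ^ 2 := by
    rw [ha, hc]; linear_combination (w ^ 2 + y ^ 2) * hpyth
  have hbd : b ^ 2 + d ^ 2 = x ^ 2 + z ^ 2 := by
    rw [hb, hd]; linear_combination (x ^ 2 + z ^ 2) * hpyth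
  have hinv : a * b + c * d = w * x + y * z := by
    rw [ha, hb, hc, hd]; linear_combination (w * x + y * z) * hpyth
  have hsqab : (a * b) ^ 2 ≤ (w ^ 2 + y ^ 2) * (x ^ 2 + z ^ 2) := by
    rw [← hac, ← hbd]; nlinarith [sq_nonneg (a * d), sq_nonneg (c * b), sq_nonneg (c * d)]
  have hsqcd : (c * d) ^ 2 ≤ (w ^ 2 + y ^ 2) * (x ^ 2 + z ^ 2) := by
    rw [← hac, ← hbd]; nlinarith [sq_nonneg (a * b), sq_nonneg (a * d), sq_nonneg (c * b)]
  have hab : |a * b| ≤ r := by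
    rw [← Real.sqrt_sq_eq_abs, hrdef]; exact Real.sqrt_le_sqrt hsqab
  have hcd : |c * d| ≤ r := by
    rw [← Real.sqrt_sq_eq_abs, hrdef]; exact Real.sqrt_le_sqrt hsqcd
  have h1 := fhat_shift_bound hr hab
  have h2 := fhat_shift_bound hr hcd
  have heq : Psi a b c d + (w * x + y * z) * Real.logb 2 r
      = (fhat a b + a * b * Real.logb 2 r) + (fhat c d + c * d * Real.logb 2 r) := by
    rw [Psi, ← hinv]; ring
  rw [heq]
  calc |(fhat a b + a * b * Real.logb 2 r) + (fhat c d + c * d * Real.logb 2 r)|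
      ≤ |fhat a b + a * b * Real.logb 2 r| + |fhat c d + c * d * Real.logb 2 r| :=
        abs_add_le _ _
    _ ≤ r + r := add_le_add h1 h2
    _ = 2 * r := by ring

/-- The oscillation, over all rotation angles, of the two-coordinate quasi-entropy
contribution is at most `C·√((w²+y²)(x²+z²))` for an absolute constant `C`. -/
theorem stmt14 :
    ∃ C : ℝ, 0 < C ∧ ∀ w x y z θ θ' : ℝ,
      θ ∈ Set.Icc 0 (2 * π) → θ' ∈ Set.Icc 0 (2 * π) →
      |Psi (w * cos θ + y * sin θ) (x * cos θ + z * sin θ)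
          (-w * sin θ + y * cos θ) (-x * sin θ + z * cos θ) -
       Psi (w * cos θ' + y * sin θ') (x * cos θ' + z * sin θ')
          (-w * sin θ' + y * cos θ') (-x * sin θ' + z * cos θ')| ≤
        C * Real.sqrt ((w ^ 2 + y ^ 2) * (x ^ 2 + z ^ 2)) := by
  refine ⟨4, by norm_num, fun w x y z θ θ' _ _ => ?_⟩
  by_cases hr : 0 < Real.sqrt ((w ^ 2 + y ^ 2) * (x ^ 2 + z ^ 2))
  · have h1 := psi_bound w x y z θ hr
    have h2 := psi_bound w x y z θ' hr
    set K := (w * x + y * z) *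
      Real.logb 2 (Real.sqrt ((w ^ 2 + y ^ 2) * (x ^ 2 + z ^ 2))) with hK
    set A := Psi (w * cos θ + y * sin θ) (x * cos θ + z * sin θ)
      (-w * sin θ + y * cos θ) (-x * sin θ + z * cos θ) with hA
    set B := Psi (w * cos θ' + y * sin θ') (x * cos θ' + z * sin θ')
      (-w * sin θ' + y * cos θ') (-x * sin θ' + z * cos θ') with hB
    have heq : A - B = (A + K) - (B + K) := by ring
    calc |A - B| = |(A + K) - (B + K)| := by rw [heq]
      _ ≤ |A + K| + |B + K| := abs_sub _ _
      _ ≤ 4 * Real.sqrt ((w ^ 2 + y ^ 2) * (x ^ 2 + z ^ 2)) := by linarith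
  · -- degenerate case
    have hnn : (0:ℝ) ≤ Real.sqrt ((w ^ 2 + y ^ 2) * (x ^ 2 + z ^ 2)) := Real.sqrt_nonneg _
    have hzero : Real.sqrt ((w ^ 2 + y ^ 2) * (x ^ 2 + z ^ 2)) = 0 := le_antisymm (not_lt.1 hr) hnn
    have hprod : (w ^ 2 + y ^ 2) * (x ^ 2 + z ^ 2) = 0 := by
      have hle : (w ^ 2 + y ^ 2) * (x ^ 2 + z ^ 2) ≤ 0 := Real.sqrt_eq_zero'.mp hzero
      nlinarith [sq_nonneg w, sq_nonneg y, sq_nonneg x, sq_nonneg z,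
        mul_nonneg (by positivity : (0:ℝ) ≤ w ^ 2 + y ^ 2) (by positivity : (0:ℝ) ≤ x ^ 2 + z ^ 2)]
    rcases mul_eq_zero.mp hprod with h | h
    · have hw : w = 0 := by nlinarith [sq_nonneg w, sq_nonneg y]
      have hy : y = 0 := by nlinarith [sq_nonneg w, sq_nonneg y]
      subst hw; subst hy
      simp [Psi, fhat, hzero]
    · have hx : x = 0 := by nlinarith [sq_nonneg x, sq_nonneg z]
      have hz : z = 0 := by nlinarith [sq_nonneg x, sq_nonneg z]
      subst hx; subst hz
      simp [Psi, fhat, hzero]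
end

section
/- Let M be an invertible n×n real matrix, and let S be a Givens rotation acting on coordinates k < ℓ (orthogonal, equal to identity except on rows/columns k, ℓ, where it is a 2×2 rotation by angle θ). Then |Φ(SM) − Φ(M)| ≤ C·‖M‖·‖M⁻¹‖ for an absolute constant C, where Φ is the quasi-entropy Φ(M) = −∑_{i,j} f̂(M(i,j), M⁻¹(j,i)) with f̂(x,y) = −xy·log₂|xy| for xy ≠ 0, else 0, and ‖·‖ denotes spectral norm. -/
/-!
Write `negMulLog t = -t log t`, so that `fhat x y = negMulLog (x y) / log 2`. Since
`(S M)⁻¹ = M⁻¹ Sᵀ`, the rotation changes only rows `k, ℓ` of `M` and columns `k, ℓ` of `M⁻¹`, so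
in each column `j` only the two products `M k j * M⁻¹ j k` and `M ℓ j * M⁻¹ j ℓ` change, and their
sum is preserved: it is the inner product of two planar vectors rotated by the same angle. The
defect `negMulLog a + negMulLog b - negMulLog (a + b)` is homogeneous of degree one, hence at most
`6 max (|a|, |b|)`, so column `j` contributes at most
`12 √(M k j² + M ℓ j²) √(M⁻¹ j k² + M⁻¹ j ℓ²)`. Cauchy–Schwarz over `j`, together with the bound
of row and column norms by the spectral norm, gives the constant `24 / log 2`.
-/

open Matrix Real

noncomputable def Phi {n : ℕ} (M : Matrix (Fin n) (Fin n) ℝ) : ℝ :=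
  -∑ i : Fin n, ∑ j : Fin n, fhat (M i j) (M⁻¹ j i)

/-- The spectral norm (ℓ²→ℓ² operator norm) of a real matrix. -/
noncomputable def specNorm {m n : Type*} [Fintype m] [Fintype n] [DecidableEq n]
    (A : Matrix m n ℝ) : ℝ :=
  ‖LinearMap.toContinuousLinearMap (Matrix.toEuclideanLin A)‖

/-- The Givens rotation on coordinates `k < ℓ` with angle `θ`. -/
noncomputable def givens {n : ℕ} (k ℓ : Fin n) (θ : ℝ) : Matrix (Fin n) (Fin n) ℝ :=
  fun i j =>
    if i = k ∧ j = k then cos θ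
    else if i = k ∧ j = ℓ then sin θ
    else if i = ℓ ∧ j = k then -sin θ
    else if i = ℓ ∧ j = ℓ then cos θ
    else if i = j then 1 else 0

theorem fhat_eq_negMulLog_div (x y : ℝ) : fhat x y = negMulLog (x * y) / log 2 := by
  unfold fhat negMulLog logb
  split_ifs with h
  · simp [h]
  · rw [log_abs]; ring

theorem abs_negMulLog_le_two {t : ℝ} (ht : |t| ≤ 2) : |negMulLog t| ≤ 2 := by
  have habs : |negMulLog t| = |negMulLog (|t|)| := by
    rw [negMulLog, negMulLog, log_abs, abs_mul, abs_mul, abs_neg, abs_neg, abs_abs]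
  rw [habs]
  rcases (abs_nonneg t).eq_or_lt with h0 | h0
  · simp [← h0]
  rcases le_or_gt |t| 1 with ht1 | ht1
  · rw [negMulLog, neg_mul, abs_neg, mul_comm]
    exact (abs_log_mul_self_lt |t| h0 ht1).le.trans one_le_two
  · have hlog : 0 ≤ log |t| := log_nonneg ht1.le
    have hlog2 : log |t| ≤ 1 :=
      (log_le_log h0 ht).trans (log_two_lt_d9.le.trans (by norm_num))
    rw [negMulLog, neg_mul, abs_neg, abs_of_nonneg (by positivity)]
    nlinarith

theorem negMulLog_mul_add_sub (r a b : ℝ) :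
    negMulLog (r * a) + negMulLog (r * b) - negMulLog (r * (a + b)) =
      r * (negMulLog a + negMulLog b - negMulLog (a + b)) := by
  simp only [negMulLog_mul]; ring

theorem abs_negMulLog_add_sub_le {a b r : ℝ} (ha : |a| ≤ r) (hb : |b| ≤ r) :
    |negMulLog a + negMulLog b - negMulLog (a + b)| ≤ 6 * r := by
  rcases (abs_nonneg a |>.trans ha).eq_or_lt with rfl | hr
  · simp [abs_nonpos_iff.1 ha, abs_nonpos_iff.1 hb]
  obtain ⟨u, rfl⟩ : ∃ u, a = r * u := ⟨a / r, by field_simp⟩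
  obtain ⟨v, rfl⟩ : ∃ v, b = r * v := ⟨b / r, by field_simp⟩
  rw [abs_mul, abs_of_pos hr] at ha hb
  have hu : |u| ≤ 1 := (mul_le_iff_le_one_right hr).1 ha
  have hv : |v| ≤ 1 := (mul_le_iff_le_one_right hr).1 hb
  have huv : |u + v| ≤ 2 := (abs_add_le u v).trans (by linarith)
  rw [← mul_add, negMulLog_mul_add_sub, abs_mul, abs_of_pos hr, mul_comm 6 r]
  gcongr
  calc |negMulLog u + negMulLog v - negMulLog (u + v)|
      ≤ |negMulLog u| + |negMulLog v| + |negMulLog (u + v)| :=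
        (abs_sub _ _).trans (by gcongr; exact abs_add_le _ _)
    _ ≤ 2 + 2 + 2 := by gcongr <;> apply abs_negMulLog_le_two <;> linarith
    _ = 6 := by norm_num

theorem abs_negMulLog_add_sub_le_of_add_eq {a b a' b' r : ℝ} (hsum : a' + b' = a + b)
    (ha : |a| ≤ r) (hb : |b| ≤ r) (ha' : |a'| ≤ r) (hb' : |b'| ≤ r) :
    |negMulLog a' + negMulLog b' - (negMulLog a + negMulLog b)| ≤ 12 * r :=
  calc |negMulLog a' + negMulLog b' - (negMulLog a + negMulLog b)|
      = |(negMulLog a' + negMulLog b' - negMulLog (a' + b'))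
          - (negMulLog a + negMulLog b - negMulLog (a + b))| := by rw [hsum]; ring_nf
    _ ≤ 6 * r + 6 * r := (abs_sub _ _).trans
          (add_le_add (abs_negMulLog_add_sub_le ha' hb') (abs_negMulLog_add_sub_le ha hb))
    _ = 12 * r := by ring

theorem abs_mul_le_sqrt_mul_sqrt (x₁ x₂ y₁ y₂ : ℝ) :
    |x₁ * y₁| ≤ √(x₁ ^ 2 + x₂ ^ 2) * √(y₁ ^ 2 + y₂ ^ 2) := by
  rw [abs_mul]
  exact mul_le_mul (abs_le_sqrt (le_add_of_nonneg_right (sq_nonneg _)))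
    (abs_le_sqrt (le_add_of_nonneg_right (sq_nonneg _))) (abs_nonneg _) (sqrt_nonneg _)

theorem abs_negMulLog_rotate_sub_le {c s : ℝ} (hcs : c ^ 2 + s ^ 2 = 1) (x₁ x₂ y₁ y₂ : ℝ) :
    |negMulLog ((c * x₁ + s * x₂) * (c * y₁ + s * y₂))
        + negMulLog ((-s * x₁ + c * x₂) * (-s * y₁ + c * y₂))
        - (negMulLog (x₁ * y₁) + negMulLog (x₂ * y₂))|
      ≤ 12 * (√(x₁ ^ 2 + x₂ ^ 2) * √(y₁ ^ 2 + y₂ ^ 2)) := by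
  have hx : (c * x₁ + s * x₂) ^ 2 + (-s * x₁ + c * x₂) ^ 2 = x₁ ^ 2 + x₂ ^ 2 := by
    linear_combination (x₁ ^ 2 + x₂ ^ 2) * hcs
  have hy : (c * y₁ + s * y₂) ^ 2 + (-s * y₁ + c * y₂) ^ 2 = y₁ ^ 2 + y₂ ^ 2 := by
    linear_combination (y₁ ^ 2 + y₂ ^ 2) * hcs
  apply abs_negMulLog_add_sub_le_of_add_eq (by linear_combination (x₁ * y₁ + x₂ * y₂) * hcs)
  · exact abs_mul_le_sqrt_mul_sqrt _ _ _ _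
  · rw [add_comm (x₁ ^ 2), add_comm (y₁ ^ 2)]
    exact abs_mul_le_sqrt_mul_sqrt _ _ _ _
  · rw [← hx, ← hy]
    exact abs_mul_le_sqrt_mul_sqrt _ _ _ _
  · rw [← hx, ← hy, add_comm ((c * x₁ + s * x₂) ^ 2), add_comm ((c * y₁ + s * y₂) ^ 2)]
    exact abs_mul_le_sqrt_mul_sqrt _ _ _ _

section SpecNorm

open scoped Matrix.Norms.L2Operator

variable {m n : Type*} [Fintype m] [Fintype n] [DecidableEq m] [DecidableEq n]

omit [DecidableEq m] in
theorem specNorm_nonneg (A : Matrix m n ℝ) : 0 ≤ specNorm A := norm_nonneg _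

omit [DecidableEq m] in
theorem specNorm_eq_l2_opNorm (A : Matrix m n ℝ) : specNorm A = ‖A‖ := rfl

theorem specNorm_transpose (A : Matrix m n ℝ) : specNorm Aᵀ = specNorm A := by
  rw [specNorm_eq_l2_opNorm, specNorm_eq_l2_opNorm, ← conjTranspose_eq_transpose_of_trivial,
    l2_opNorm_conjTranspose]

omit [DecidableEq m] in
theorem sum_col_sq_le_specNorm_sq (A : Matrix m n ℝ) (j : n) :
    ∑ i, A i j ^ 2 ≤ specNorm A ^ 2 := by
  have h := A.l2_opNorm_mulVec (EuclideanSpace.single j 1)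
  rw [PiLp.norm_single, norm_one, mul_one, EuclideanSpace.norm_eq] at h
  simp only [PiLp.ofLp_single, mulVec_single, MulOpposite.op_one, one_smul,
    PiLp.continuousLinearEquiv_symm_apply, col_apply, norm_eq_abs, sq_abs] at h
  rw [specNorm_eq_l2_opNorm]
  exact (sqrt_le_iff.1 h).2

theorem sum_row_sq_le_specNorm_sq (A : Matrix m n ℝ) (i : m) :
    ∑ j, A i j ^ 2 ≤ specNorm A ^ 2 := by
  simpa [specNorm_transpose] using sum_col_sq_le_specNorm_sq Aᵀ i

theorem sum_sqrt_rows_mul_sqrt_cols_le (A : Matrix m n ℝ) (B : Matrix n m ℝ) (k ℓ : m) :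
    ∑ j, √(A k j ^ 2 + A ℓ j ^ 2) * √(B j k ^ 2 + B j ℓ ^ 2)
      ≤ 2 * specNorm A * specNorm B := by
  have hA : √(∑ j, (A k j ^ 2 + A ℓ j ^ 2)) ≤ √2 * specNorm A := by
    rw [← sqrt_sq (specNorm_nonneg A), ← sqrt_mul zero_le_two, Finset.sum_add_distrib]
    gcongr
    linarith [sum_row_sq_le_specNorm_sq A k, sum_row_sq_le_specNorm_sq A ℓ]
  have hB : √(∑ j, (B j k ^ 2 + B j ℓ ^ 2)) ≤ √2 * specNorm B := by
    rw [← sqrt_sq (specNorm_nonneg B), ← sqrt_mul zero_le_two, Finset.sum_add_distrib]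
    gcongr
    linarith [sum_col_sq_le_specNorm_sq B k, sum_col_sq_le_specNorm_sq B ℓ]
  calc ∑ j, √(A k j ^ 2 + A ℓ j ^ 2) * √(B j k ^ 2 + B j ℓ ^ 2)
      ≤ √(∑ j, (A k j ^ 2 + A ℓ j ^ 2)) * √(∑ j, (B j k ^ 2 + B j ℓ ^ 2)) :=
        sum_sqrt_mul_sqrt_le _ (fun _ ↦ by positivity) (fun _ ↦ by positivity)
    _ ≤ (√2 * specNorm A) * (√2 * specNorm B) :=
        mul_le_mul hA hB (sqrt_nonneg _) (mul_nonneg (sqrt_nonneg _) (specNorm_nonneg A))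
    _ = 2 * specNorm A * specNorm B := by
        rw [mul_mul_mul_comm, mul_self_sqrt zero_le_two, mul_assoc]

end SpecNorm

section Givens

variable {n : ℕ} {k ℓ : Fin n} (θ : ℝ) (M : Matrix (Fin n) (Fin n) ℝ)

theorem givens_mul_apply_left (hkl : k ≠ ℓ) (j : Fin n) :
    (givens k ℓ θ * M) k j = cos θ * M k j + sin θ * M ℓ j := by
  rw [mul_apply, Fintype.sum_eq_add k ℓ hkl]
  · simp [givens, hkl.symm]
  · rintro q ⟨hqk, hql⟩
    simp [givens, hqk, hql, Ne.symm hqk]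

theorem givens_mul_apply_right (hkl : k ≠ ℓ) (j : Fin n) :
    (givens k ℓ θ * M) ℓ j = -sin θ * M k j + cos θ * M ℓ j := by
  rw [mul_apply, Fintype.sum_eq_add k ℓ hkl]
  · simp [givens, hkl.symm]
  · rintro q ⟨hqk, hql⟩
    simp [givens, hqk, hql, hkl.symm, Ne.symm hql]

theorem givens_mul_apply_of_ne {i : Fin n} (hik : i ≠ k) (hil : i ≠ ℓ) (j : Fin n) :
    (givens k ℓ θ * M) i j = M i j := by
  rw [mul_apply, Fintype.sum_eq_single i]
  · simp [givens, hik, hil]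
  · intro q hqi
    simp [givens, hik, hil, Ne.symm hqi]

theorem givens_mul_transpose_self (hkl : k ≠ ℓ) : givens k ℓ θ * (givens k ℓ θ)ᵀ = 1 := by
  have hlk := hkl.symm
  have hcs := cos_sq_add_sin_sq θ
  ext i j
  by_cases hik : i = k
  · rw [hik, givens_mul_apply_left θ _ hkl]
    by_cases hjk : j = k
    · simp [givens, hjk, hlk, one_apply]; linear_combination hcs
    by_cases hjl : j = ℓ
    · simp [givens, hjl, hkl, hlk, one_apply]; ring
    · simp [givens, hjk, hjl, Ne.symm hjk, one_apply]
  by_cases hil : i = ℓ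
  · rw [hil, givens_mul_apply_right θ _ hkl]
    by_cases hjk : j = k
    · simp [givens, hjk, hlk, one_apply]; ring
    by_cases hjl : j = ℓ
    · simp [givens, hjl, hlk, one_apply]; linear_combination hcs
    · simp [givens, hjk, hjl, Ne.symm hjl, one_apply]
  · rw [givens_mul_apply_of_ne θ _ hik hil]
    simp [givens, hik, hil, one_apply, eq_comm]

theorem mul_transpose_givens_apply_left (hkl : k ≠ ℓ) (j : Fin n) :
    (M * (givens k ℓ θ)ᵀ) j k = cos θ * M j k + sin θ * M j ℓ := by
  rw [← transpose_apply (M * _), transpose_mul, transpose_transpose,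
    givens_mul_apply_left θ _ hkl]
  rfl

theorem mul_transpose_givens_apply_right (hkl : k ≠ ℓ) (j : Fin n) :
    (M * (givens k ℓ θ)ᵀ) j ℓ = -sin θ * M j k + cos θ * M j ℓ := by
  rw [← transpose_apply (M * _), transpose_mul, transpose_transpose,
    givens_mul_apply_right θ _ hkl]
  rfl

theorem mul_transpose_givens_apply_of_ne {i : Fin n} (hik : i ≠ k) (hil : i ≠ ℓ) (j : Fin n) :
    (M * (givens k ℓ θ)ᵀ) j i = M j i := by
  rw [← transpose_apply (M * _), transpose_mul, transpose_transpose,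
    givens_mul_apply_of_ne θ _ hik hil]
  rfl

end Givens

theorem abs_sum_negMulLog_givens_sub_le {n : ℕ} {k ℓ : Fin n} (hkl : k ≠ ℓ) (θ : ℝ)
    (A B : Matrix (Fin n) (Fin n) ℝ) :
    |∑ i, ∑ j, negMulLog ((givens k ℓ θ * A) i j * (B * (givens k ℓ θ)ᵀ) j i)
        - ∑ i, ∑ j, negMulLog (A i j * B j i)|
      ≤ 24 * specNorm A * specNorm B := by
  set r : Fin n → ℝ := fun j ↦ √(A k j ^ 2 + A ℓ j ^ 2) * √(B j k ^ 2 + B j ℓ ^ 2)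
  have hcol : ∀ j, |∑ i, (negMulLog ((givens k ℓ θ * A) i j * (B * (givens k ℓ θ)ᵀ) j i)
      - negMulLog (A i j * B j i))| ≤ 12 * r j := by
    intro j
    rw [Fintype.sum_eq_add k ℓ hkl fun i ⟨hik, hil⟩ ↦ by
      rw [givens_mul_apply_of_ne θ A hik hil, mul_transpose_givens_apply_of_ne θ B hik hil,
        sub_self]]
    rw [givens_mul_apply_left θ A hkl, givens_mul_apply_right θ A hkl,
      mul_transpose_givens_apply_left θ B hkl, mul_transpose_givens_apply_right θ B hkl]
    convert abs_negMulLog_rotate_sub_le (cos_sq_add_sin_sq θ) (A k j) (A ℓ j) (B j k) (B j ℓ)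
      using 2
    ring
  calc |∑ i, ∑ j, negMulLog ((givens k ℓ θ * A) i j * (B * (givens k ℓ θ)ᵀ) j i)
        - ∑ i, ∑ j, negMulLog (A i j * B j i)|
      = |∑ j, ∑ i, (negMulLog ((givens k ℓ θ * A) i j * (B * (givens k ℓ θ)ᵀ) j i)
          - negMulLog (A i j * B j i))| := by
        rw [Finset.sum_comm, Finset.sum_comm (f := fun i j ↦ negMulLog (A i j * B j i)),
          ← Finset.sum_sub_distrib]
        simp only [Finset.sum_sub_distrib]
    _ ≤ ∑ j, 12 * r j :=
        (Finset.abs_sum_le_sum_abs _ _).trans (Finset.sum_le_sum fun j _ ↦ hcol j)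
    _ ≤ 12 * (2 * specNorm A * specNorm B) := by
        rw [← Finset.mul_sum]
        gcongr
        exact sum_sqrt_rows_mul_sqrt_cols_le A B k ℓ
    _ = 24 * specNorm A * specNorm B := by ring

theorem Phi_eq_neg_sum_negMulLog_div {n : ℕ} (M : Matrix (Fin n) (Fin n) ℝ) :
    Phi M = -(∑ i, ∑ j, negMulLog (M i j * M⁻¹ j i)) / log 2 := by
  simp only [Phi, fhat_eq_negMulLog_div, Finset.sum_div, neg_div]

/-- Applying a Givens rotation changes the quasi-entropy by at most
`C · ‖M‖ · ‖M⁻¹‖` for an absolute constant `C`. -/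
theorem stmt15 :
    ∃ C : ℝ, 0 < C ∧ ∀ (n : ℕ) (M : Matrix (Fin n) (Fin n) ℝ), IsUnit M.det →
      ∀ (k ℓ : Fin n), k < ℓ → ∀ θ : ℝ,
      |Phi (givens k ℓ θ * M) - Phi M| ≤ C * specNorm M * specNorm M⁻¹ := by
  refine ⟨24 / log 2, by positivity, fun n M _ k ℓ hkl θ ↦ ?_⟩
  have hinv : (givens k ℓ θ * M)⁻¹ = M⁻¹ * (givens k ℓ θ)ᵀ := by
    rw [Matrix.mul_inv_rev, inv_eq_right_inv (givens_mul_transpose_self θ hkl.ne)]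
  have hlog : 0 < log 2 := log_pos one_lt_two
  rw [Phi_eq_neg_sum_negMulLog_div, Phi_eq_neg_sum_negMulLog_div, hinv, ← sub_div, abs_div,
    abs_of_pos hlog, neg_sub_neg, abs_sub_comm, div_mul_eq_mul_div, div_mul_eq_mul_div]
  gcongr
  exact abs_sum_negMulLog_givens_sub_le hkl.ne θ M M⁻¹
end

section
/- There exists a constant C₀ with 0 < C₀ < 1/4 such that for all n ≥ 2 and all ε ∈ ℝⁿ with ‖ε‖₂ ≤ C₀: −∑_{i=1}^n (1/√n)·(1/√n + ε_i)·log₂|(1/√n)·(1/√n + ε_i)| ≥ (3/4)·log₂ n, where terms with (1/√n)(1/√n + ε_i) = 0 are taken as 0. -/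
open Real

lemma xlogx_anti {x a : ℝ} (hx : 0 < x) (hxa : x ≤ a) (ha : a ≤ Real.exp (-1)) :
    a * Real.log a ≤ x * Real.log x := by
  have ha0 : 0 < a := lt_of_lt_of_le hx hxa
  have hla : Real.log a ≤ -1 := by
    calc Real.log a ≤ Real.log (Real.exp (-1)) := Real.log_le_log ha0 ha
    _ = -1 := Real.log_exp _
  have h1 : x * Real.log x = x * Real.log a + x * Real.log (x / a) := by
    rw [Real.log_div hx.ne' ha0.ne']; ring
  have h2 : Real.log (a / x) ≤ a / x - 1 := Real.log_le_sub_one_of_pos (by positivity)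
  have h3 : Real.log (x / a) = -Real.log (a / x) := by
    rw [← Real.log_inv]; congr 1; field_simp
  have h4 : (x - a) * (-1) ≤ (x - a) * Real.log a :=
    mul_le_mul_of_nonpos_left hla (by linarith)
  have h5 : x * Real.log (a / x) ≤ x * (a / x - 1) :=
    mul_le_mul_of_nonneg_left h2 hx.le
  have h6 : x * (a / x - 1) = a - x := by field_simp
  nlinarith


lemma keyA (N : ℝ) (hN : 2 ≤ N) (e : ℝ) (he : |e| ≤ 1/16) :
    1 / Real.sqrt N * (1 / Real.sqrt N + e) * Real.log N - (|e| / Real.sqrt N + e ^ 2)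
      - 2 * e ^ 2 * Real.log N
      ≤ -(1 / Real.sqrt N * (1 / Real.sqrt N + e) * Real.log |1 / Real.sqrt N * (1 / Real.sqrt N + e)|) := by
  have hN0 : (0:ℝ) < N := by linarith
  set sN := Real.sqrt N with hsN
  have hs0 : 0 < sN := Real.sqrt_pos.mpr hN0
  have hs1 : 1 ≤ sN := by
    rw [hsN]; nlinarith [Real.sq_sqrt hN0.le, Real.sqrt_nonneg N]
  have hsq : sN * sN = N := Real.mul_self_sqrt hN0.le
  have hlogN : 0 < Real.log N := Real.log_pos (by linarith)
  clear_value sN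
  set p := 1 / sN * (1 / sN + e) with hp
  clear_value p
  have hQ : 0 ≤ e ^ 2 * Real.log N := by positivity
  rcases le_or_gt 0 p with hp0 | hp0
  · -- p ≥ 0 case
    set M := 1 / sN * (1 / sN + |e|) with hM
    clear_value M
    have hpM : p ≤ M := by
      have : e ≤ |e| := le_abs_self e
      rw [hp, hM]
      have h1s : 0 < 1 / sN := by positivity
      nlinarith
    have hM0 : 0 < M := by
      have : 0 ≤ |e| := abs_nonneg e
      rw [hM]; positivity
    have hstep1 : p * Real.log |p| ≤ p * Real.log M := by
      rcases eq_or_lt_of_le hp0 with h | h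
      · simp [← h]
      · have : Real.log |p| ≤ Real.log M := by
          rw [abs_of_pos h]; exact Real.log_le_log h hpM
        exact mul_le_mul_of_nonneg_left this hp0
    have hMeq : M = 1 / N * (1 + sN * |e|) := by
      rw [hM, ← hsq]; field_simp
    have hlogM : Real.log M = -Real.log N + Real.log (1 + sN * |e|) := by
      rw [hMeq, Real.log_mul (by positivity) (by positivity), Real.log_div one_ne_zero hN0.ne',
        Real.log_one]
      ring
    have ht0 : 0 ≤ sN * |e| := by positivity
    have hlt : Real.log (1 + sN * |e|) ≤ sN * |e| := by
      have := Real.log_le_sub_one_of_pos (x := 1 + sN * |e|) (by linarith)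
      linarith
    have hlt0 : 0 ≤ Real.log (1 + sN * |e|) := by
      rw [← Real.log_one]; exact Real.log_le_log one_pos (by linarith)
    have hstep2 : p * Real.log (1 + sN * |e|) ≤ |e| / sN + e ^ 2 := by
      have h1 : p * Real.log (1 + sN * |e|) ≤ M * (sN * |e|) := by
        calc p * Real.log (1 + sN * |e|) ≤ M * Real.log (1 + sN * |e|) :=
              mul_le_mul_of_nonneg_right hpM hlt0
        _ ≤ M * (sN * |e|) := mul_le_mul_of_nonneg_left hlt hM0.le
      have h2 : M * (sN * |e|) = |e| / sN + e ^ 2 := by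
        rw [hM, ← sq_abs e]
        field_simp
      linarith
    have : p * Real.log |p| ≤ -(p * Real.log N) + (|e| / sN + e ^ 2) := by
      have := hstep1
      rw [hlogM] at this
      nlinarith
    nlinarith
  · -- p < 0 case
    have hse : 1 / sN + e < 0 := by
      by_contra h
      push_neg at h
      have : 0 ≤ p := by rw [hp]; positivity
      linarith
    have heneg : e < 0 := by
      have : 0 < 1 / sN := by positivity
      linarith
    have habs : |e| = -e := abs_of_neg heneg
    have hegt : 1 / sN < |e| := by rw [habs]; linarith
    set a := |e| / sN with ha
    clear_value a
    have ha0 : 0 < a := by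
      rw [ha]
      exact div_pos (lt_trans (by positivity) hegt) hs0
    have hpa : -p ≤ a := by
      rw [hp, ha, habs]
      have h1s : 0 < 1 / sN := by positivity
      have expand : -(1 / sN * (1 / sN + e)) = -e / sN - 1 / sN * (1 / sN) := by ring
      rw [expand]
      nlinarith [mul_pos h1s h1s]
    have hp0' : 0 < -p := by linarith
    have hae : a ≤ exp (-1) := by
      have h1 : a ≤ |e| := by
        rw [ha]
        calc |e| / sN ≤ |e| / 1 := by
              apply div_le_div_of_nonneg_left (abs_nonneg e) one_pos hs1
        _ = |e| := by ring
      have h2 : (1:ℝ)/16 ≤ Real.exp (-1) := by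
        rw [Real.exp_neg]
        have h16 : Real.exp 1 ≤ 16 := by linarith [Real.exp_one_lt_d9]
        calc (1:ℝ)/16 ≤ 1 / Real.exp 1 := one_div_le_one_div_of_le (Real.exp_pos 1) h16
        _ = (Real.exp 1)⁻¹ := one_div _
      linarith
    have hmono : a * Real.log a ≤ (-p) * Real.log (-p) := xlogx_anti hp0' hpa hae
    have hloga : -Real.log N ≤ Real.log a := by
      have he0 : (0:ℝ) < |e| := lt_trans (by positivity) hegt
      have h1 : Real.log a = Real.log |e| - Real.log sN := by
        rw [ha]; exact Real.log_div he0.ne' hs0.ne'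
      have h2 : -Real.log sN ≤ Real.log |e| := by
        rw [← Real.log_inv]
        exact Real.log_le_log (by positivity) (by rw [inv_eq_one_div]; linarith)
      have h3 : Real.log N = 2 * Real.log sN := by
        rw [← hsq, Real.log_mul hs0.ne' hs0.ne']; ring
      linarith
    have hae2 : a ≤ e ^ 2 := by
      rw [ha, div_le_iff₀ hs0]
      have h1 : 1 < |e| * sN := (div_lt_iff₀ hs0).mp hegt
      calc |e| ≤ |e| * (|e| * sN) := by nlinarith [abs_nonneg e]
      _ = e ^ 2 * sN := by rw [← sq_abs]; ring
    have h4 : -(e ^ 2 * Real.log N) ≤ a * Real.log a := by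
      have s1 : a * (-Real.log N) ≤ a * Real.log a := mul_le_mul_of_nonneg_left hloga ha0.le
      have s2 : a * Real.log N ≤ e ^ 2 * Real.log N := mul_le_mul_of_nonneg_right hae2 hlogN.le
      linarith
    have hterm : -(e ^ 2 * Real.log N) ≤ -(p * Real.log |p|) := by
      rw [abs_of_neg hp0]
      linarith
    have hp1 : 0 ≤ |e| / sN := by positivity
    have hp2 : 0 ≤ e ^ 2 := by positivity
    have hplogN : p * Real.log N ≤ 0 :=
      mul_nonpos_of_nonpos_of_nonneg hp0.le hlogN.le
    linarith


/-- There is a constant `0 < C₀ < 1/4` such that for all `n ≥ 2` and `ε ∈ ℝⁿ`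
with `‖ε‖₂ ≤ C₀`, the quasi-entropy of the perturbed uniform vector against the
uniform vector is at least `(3/4)·log₂ n`. -/
theorem stmt17 :
    ∃ C₀ : ℝ, 0 < C₀ ∧ C₀ < 1 / 4 ∧
      ∀ (n : ℕ), 2 ≤ n → ∀ ε : Fin n → ℝ, Real.sqrt (∑ i, ε i ^ 2) ≤ C₀ →
        (3 / 4) * logb 2 n ≤
          -∑ i, (1 / Real.sqrt n) * (1 / Real.sqrt n + ε i) *
            logb 2 |(1 / Real.sqrt n) * (1 / Real.sqrt n + ε i)| := by

  refine ⟨1/16, by norm_num, by norm_num, ?_⟩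
  intro n hn ε hε
  set N : ℝ := (n:ℝ) with hNdef
  have hN2 : (2:ℝ) ≤ N := by rw [hNdef]; exact_mod_cast hn
  have hN0 : (0:ℝ) < N := by linarith
  have hs0 : 0 < Real.sqrt N := Real.sqrt_pos.mpr hN0
  have hsq : Real.sqrt N * Real.sqrt N = N := Real.mul_self_sqrt hN0.le
  have hlogN : 0 < Real.log N := Real.log_pos (by linarith)
  have hlog2 : 0 < Real.log 2 := Real.log_pos (by norm_num)
  have hQ0 : 0 ≤ ∑ i, ε i ^ 2 := Finset.sum_nonneg fun i _ => sq_nonneg _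
  have hQ : ∑ i, ε i ^ 2 ≤ (1/16)^2 := by
    nlinarith [Real.sq_sqrt hQ0, Real.sqrt_nonneg (∑ i, ε i ^ 2)]
  have habs : ∀ i, |ε i| ≤ 1/16 := by
    intro i
    have h1 : ε i ^ 2 ≤ ∑ j, ε j ^ 2 :=
      Finset.single_le_sum (fun j _ => sq_nonneg (ε j)) (Finset.mem_univ i)
    nlinarith [abs_nonneg (ε i), sq_abs (ε i)]
  have hL1 : ∑ i, |ε i| ≤ Real.sqrt N * (1/16) := by
    have h1 : (∑ i, |ε i|) ^ 2 ≤ (((Finset.univ : Finset (Fin n)).card : ℕ) : ℝ) * ∑ i : Fin n, |ε i| ^ 2 := by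
      exact sq_sum_le_card_mul_sum_sq (s := (Finset.univ : Finset (Fin n))) (f := fun i => |ε i|)
    have h2 : ∑ i : Fin n, |ε i| ^ 2 = ∑ i, ε i ^ 2 := by
      apply Finset.sum_congr rfl; intro i _; exact sq_abs (ε i)
    have h3 : (((Finset.univ : Finset (Fin n)).card : ℕ) : ℝ) = N := by
      simp [hNdef]
    have h4 : (∑ i, |ε i|) ^ 2 ≤ N * (1/16)^2 := by
      rw [h3, h2] at h1
      nlinarith
    have h5 : 0 ≤ ∑ i, |ε i| := Finset.sum_nonneg fun i _ => abs_nonneg _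
    nlinarith [mul_pos hs0 hs0, hsq, mul_nonneg hs0.le (by norm_num : (0:ℝ) ≤ 1/16)]
  -- termwise key bound
  have hkey : ∑ i, (1 / Real.sqrt N * (1 / Real.sqrt N + ε i) * Real.log N
        - (|ε i| / Real.sqrt N + ε i ^ 2) - 2 * ε i ^ 2 * Real.log N)
      ≤ ∑ i, -(1 / Real.sqrt N * (1 / Real.sqrt N + ε i) *
          Real.log |1 / Real.sqrt N * (1 / Real.sqrt N + ε i)|) :=
    Finset.sum_le_sum fun i _ => keyA N hN2 (ε i) (habs i)
  -- rewrite the LHS sum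
  have e2 : ∑ i, 1 / Real.sqrt N * (1 / Real.sqrt N + ε i)
      = 1 + (∑ i, ε i) / Real.sqrt N := by
    simp only [mul_add]
    rw [Finset.sum_add_distrib, Finset.sum_const, Finset.card_univ, Fintype.card_fin,
      ← Finset.mul_sum, nsmul_eq_mul]
    have h1 : 1 / Real.sqrt N * (1 / Real.sqrt N) = 1 / N := by
      rw [div_mul_div_comm, one_mul, hsq]
    rw [h1]
    have h2 : (n:ℝ) * (1/N) = 1 := by
      rw [hNdef]; field_simp
    rw [h2]
    ring
  have e1 : ∑ i, (1 / Real.sqrt N * (1 / Real.sqrt N + ε i) * Real.log N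
        - (|ε i| / Real.sqrt N + ε i ^ 2) - 2 * ε i ^ 2 * Real.log N)
      = (1 + (∑ i, ε i) / Real.sqrt N) * Real.log N
        - ((∑ i, |ε i|) / Real.sqrt N + ∑ i, ε i ^ 2)
        - 2 * (∑ i, ε i ^ 2) * Real.log N := by
    rw [← e2, Finset.sum_sub_distrib, Finset.sum_sub_distrib, Finset.sum_add_distrib,
      ← Finset.sum_div, ← Finset.sum_mul]
    congr 1
    rw [Finset.mul_sum, ← Finset.sum_mul]
  -- bounds on the aggregates
  have hS : -(1/16) ≤ (∑ i, ε i) / Real.sqrt N := by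
    rw [le_div_iff₀ hs0]
    have := Finset.abs_sum_le_sum_abs ε Finset.univ
    have h := neg_abs_le (∑ i, ε i)
    nlinarith
  have hA : (∑ i, |ε i|) / Real.sqrt N ≤ 1/16 := by
    rw [div_le_iff₀ hs0]
    linarith
  have hlogN2 : (0.6931471803 : ℝ) ≤ Real.log N :=
    le_trans (le_of_lt Real.log_two_gt_d9) (Real.log_le_log two_pos hN2)
  -- the master inequality over `log`
  have main : (3/4) * Real.log N ≤ ∑ i, -(1 / Real.sqrt N * (1 / Real.sqrt N + ε i) *
      Real.log |1 / Real.sqrt N * (1 / Real.sqrt N + ε i)|) := by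
    refine le_trans ?_ hkey
    rw [e1]
    have hp1 : (-(1/16)) * Real.log N ≤ ((∑ i, ε i) / Real.sqrt N) * Real.log N :=
      mul_le_mul_of_nonneg_right hS hlogN.le
    have hp2 : (∑ i, ε i ^ 2) * Real.log N ≤ (1/16)^2 * Real.log N :=
      mul_le_mul_of_nonneg_right hQ hlogN.le
    nlinarith
  -- convert to `logb`
  simp only [Real.logb]
  have conv : -∑ i, 1 / Real.sqrt N * (1 / Real.sqrt N + ε i) *
        (Real.log |1 / Real.sqrt N * (1 / Real.sqrt N + ε i)| / Real.log 2)
      = (∑ i, -(1 / Real.sqrt N * (1 / Real.sqrt N + ε i) *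
          Real.log |1 / Real.sqrt N * (1 / Real.sqrt N + ε i)|)) / Real.log 2 := by
    rw [Finset.sum_div, ← Finset.sum_neg_distrib]
    apply Finset.sum_congr rfl
    intros; ring
  rw [conv, ← mul_div_assoc]
  gcongr
end
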